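/- Fix a factor index i with 1 ≤ i ≤ m−1, and assume every block is nonempty (no column of X_m is zero, so R_m = X_mᵀ X_m is an invertible diagonal matrix). Then Yᵀ P_U Y = Yᵀ P_W Y for every Y ∈ ℝⁿ (i.e. SS_{i;all} = SS_{i;m} identically, equivalently P_U = P_W) if and only if X_iᵀ (I − P_m) X_j = 0 for every j ≠ i with 1 ≤ j ≤ m−1, i.e. N_{ij} = N_{im} R_m^{-1} N_{jm}ᵀ for all such j, where N_{ij} = X_iᵀ X_j and N_{im} = X_iᵀ X_m. -/

import Mathlib

open Matrix

/-- The column space of a real `n × p` matrix `A`, as a subspace of Euclidean `ℝⁿ`. -/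
noncomputable def colSpace {n p : ℕ} (A : Matrix (Fin n) (Fin p) ℝ) :
    Submodule ℝ (EuclideanSpace ℝ (Fin n)) :=
  Submodule.span ℝ (Set.range fun t => (WithLp.toLp 2 (fun i => A i t) : EuclideanSpace ℝ (Fin n)))

/-- The orthogonal projection of `ℝⁿ` onto a subspace `S`, as an endomorphism. -/
noncomputable def projS {n : ℕ} (S : Submodule ℝ (EuclideanSpace ℝ (Fin n))) :
    EuclideanSpace ℝ (Fin n) →L[ℝ] EuclideanSpace ℝ (Fin n) :=
  S.subtypeL.comp (S.orthogonalProjection)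

/-- `(I − P_S)·A`: the matrix whose columns are the residuals of the columns of `A`
after orthogonal projection onto `S`. -/
noncomputable def residualMat {n p : ℕ} (S : Submodule ℝ (EuclideanSpace ℝ (Fin n)))
    (A : Matrix (Fin n) (Fin p) ℝ) : Matrix (Fin n) (Fin p) ℝ := fun i t =>
  A i t - projS S (WithLp.toLp 2 (fun i' => A i' t)) i

/-- The column space of the concatenation `X_{T**}` of all design matrices except the
`i`-th together with the all-ones column (the general mean). -/
noncomputable def spanExcept {n m : ℕ} {c : Fin (m + 1) → ℕ}
    (X : (j : Fin (m + 1)) → Matrix (Fin n) (Fin (c j)) ℝ) (i : Fin (m + 1)) :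
    Submodule ℝ (EuclideanSpace ℝ (Fin n)) :=
  (⨆ j ∈ Finset.univ.erase i, colSpace (X j)) ⊔
    Submodule.span ℝ {(WithLp.toLp 2 (fun _ => (1 : ℝ)) : EuclideanSpace ℝ (Fin n))}


/-! Put `K = col X_m ≤ S = col X_{T**}` and `W = (I − P_K) X_i`. Two orthogonal projections with
the same quadratic form are equal, and `(I − P_S) X_i = W` exactly when `col W ⟂ S`; so
`SS_{i;all} = SS_{i;m}` says `col W ⟂ S`. As `W ⟂ K` and `1 ∈ K`, this means `Wᵀ X_j = 0` for the
remaining treatment factors `j`. For a block design `R_m = X_mᵀ X_m` is a positive diagonal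
matrix, so `P_K = X_m R_m⁻¹ X_mᵀ` and `Wᵀ X_j = N_ij − N_im R_m⁻¹ N_jmᵀ`. -/

noncomputable def colVec {n p : ℕ} (A : Matrix (Fin n) (Fin p) ℝ) (t : Fin p) :
    EuclideanSpace ℝ (Fin n) :=
  WithLp.toLp 2 fun r => A r t

section Projection

variable {n p q k : ℕ}

theorem projS_eq_starProjection (S : Submodule ℝ (EuclideanSpace ℝ (Fin n))) :
    projS S = S.starProjection :=
  rfl

theorem forall_inner_projS_eq_iff {K L : Submodule ℝ (EuclideanSpace ℝ (Fin n))} :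
    (∀ Y, inner ℝ Y (projS K Y) = inner ℝ Y (projS L Y)) ↔ K = L := by
  refine ⟨fun h => ?_, fun h _ => h ▸ rfl⟩
  have hzero :=
    (K.starProjection_isSymmetric.sub L.starProjection_isSymmetric).inner_map_self_eq_zero.mp
      fun Y => by
        simpa [inner_sub_right, sub_eq_zero, real_inner_comm Y, projS_eq_starProjection] using h Y
  have hP : K.starProjection = L.starProjection :=
    ContinuousLinearMap.coe_injective (sub_eq_zero.mp hzero)
  rw [← K.range_starProjection, ← L.range_starProjection, hP]

theorem inner_colVec (A : Matrix (Fin n) (Fin p) ℝ) (B : Matrix (Fin n) (Fin q) ℝ)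
    (s : Fin p) (t : Fin q) : inner ℝ (colVec A s) (colVec B t) = (Aᵀ * B) s t := by
  simp [colVec, PiLp.inner_apply, Matrix.mul_apply, mul_comm]

theorem colSpace_isOrtho_colSpace_iff (A : Matrix (Fin n) (Fin p) ℝ)
    (B : Matrix (Fin n) (Fin q) ℝ) : colSpace A ⟂ colSpace B ↔ Aᵀ * B = 0 := by
  simp only [colSpace, Submodule.isOrtho_span, Set.forall_mem_range]
  rw [← Matrix.ext_iff]
  exact forall_congr' fun s => forall_congr' fun t => by rw [← inner_colVec]; rfl

theorem toLp_mulVec_mem_colSpace (A : Matrix (Fin n) (Fin p) ℝ) (v : Fin p → ℝ) :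
    WithLp.toLp 2 (A *ᵥ v) ∈ colSpace A := by
  have : WithLp.toLp 2 (A *ᵥ v) = ∑ t, v t • colVec A t := by
    ext r
    simp [colVec, Matrix.mulVec, dotProduct, mul_comm]
  rw [this]
  exact Submodule.sum_mem _ fun t _ => Submodule.smul_mem _ _ (Submodule.subset_span ⟨t, rfl⟩)

theorem mem_orthogonal_colSpace_iff (A : Matrix (Fin n) (Fin p) ℝ)
    (u : EuclideanSpace ℝ (Fin n)) :
    u ∈ (colSpace A)ᗮ ↔ Aᵀ *ᵥ u.ofLp = 0 := by
  rw [← Submodule.span_singleton_le_iff_mem, ← Submodule.isOrtho_iff_le, colSpace,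
    Submodule.isOrtho_span, funext_iff]
  simp [PiLp.inner_apply, Matrix.mulVec, dotProduct, mul_comm]

theorem colSpace_residualMat_le_orthogonal (S : Submodule ℝ (EuclideanSpace ℝ (Fin n)))
    (A : Matrix (Fin n) (Fin p) ℝ) : colSpace (residualMat S A) ≤ Sᗮ :=
  Submodule.span_le.mpr <| Set.range_subset_iff.mpr fun t =>
    S.sub_starProjection_mem_orthogonal (colVec A t)

theorem residualMat_eq_of_le {K S : Submodule ℝ (EuclideanSpace ℝ (Fin n))} (hKS : K ≤ S)
    (A : Matrix (Fin n) (Fin p) ℝ) (h : colSpace (residualMat K A) ⟂ S) :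
    residualMat S A = residualMat K A := by
  ext r t
  have hproj : projS S (colVec A t) = projS K (colVec A t) :=
    S.eq_starProjection_of_mem_orthogonal (hKS (K.starProjection_apply_mem _))
      (Submodule.isOrtho_iff_le.mp h (Submodule.subset_span ⟨t, rfl⟩))
  simp only [residualMat]
  rw [← colVec, hproj]

theorem colSpace_residualMat_eq_iff_isOrtho {K S : Submodule ℝ (EuclideanSpace ℝ (Fin n))}
    (hKS : K ≤ S) (A : Matrix (Fin n) (Fin p) ℝ) :
    colSpace (residualMat S A) = colSpace (residualMat K A) ↔ colSpace (residualMat K A) ⟂ S := by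
  refine ⟨fun h => ?_, fun h => by rw [residualMat_eq_of_le hKS A h]⟩
  rw [← h]
  exact Submodule.isOrtho_iff_le.mpr (colSpace_residualMat_le_orthogonal S A)

theorem projS_colSpace_apply {A : Matrix (Fin n) (Fin p) ℝ} (hA : IsUnit (Aᵀ * A).det)
    (v : EuclideanSpace ℝ (Fin n)) :
    projS (colSpace A) v = WithLp.toLp 2 ((A * (Aᵀ * A)⁻¹ * Aᵀ) *ᵥ v.ofLp) := by
  refine Submodule.eq_starProjection_of_mem_orthogonal ?_ ?_
  · rw [Matrix.mul_assoc, ← Matrix.mulVec_mulVec]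
    exact toLp_mulVec_mem_colSpace _ _
  · rw [mem_orthogonal_colSpace_iff, WithLp.ofLp_sub, Matrix.mulVec_sub, Matrix.mulVec_mulVec,
      ← Matrix.mul_assoc, ← Matrix.mul_assoc, Matrix.mul_nonsing_inv _ hA, Matrix.one_mul, sub_self]

theorem transpose_residualMat_colSpace_mul {A : Matrix (Fin n) (Fin p) ℝ}
    (hA : IsUnit (Aᵀ * A).det) (B : Matrix (Fin n) (Fin q) ℝ) (C : Matrix (Fin n) (Fin k) ℝ) :
    (residualMat (colSpace A) B)ᵀ * C = Bᵀ * C - (Bᵀ * A) * (Aᵀ * A)⁻¹ * (Cᵀ * A)ᵀ := by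
  have hres : residualMat (colSpace A) B = B - A * (Aᵀ * A)⁻¹ * Aᵀ * B := by
    ext a b
    simp [residualMat, projS_colSpace_apply hA, Matrix.mul_apply, Matrix.mulVec, dotProduct]
  rw [hres]
  simp [Matrix.transpose_mul, Matrix.transpose_nonsing_inv, Matrix.sub_mul, Matrix.mul_assoc]

end Projection

section DesignMatrix

variable {n p : ℕ} {A : Matrix (Fin n) (Fin p) ℝ}

theorem entry_mul_entry_eq_zero_of_ne (h01 : ∀ r t, A r t = 0 ∨ A r t = 1)
    (hrow : ∀ r, ∑ t, A r t = 1) (r : Fin n) {s t : Fin p} (hst : s ≠ t) : A r s * A r t = 0 := by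
  rcases h01 r s with hs | hs
  · rw [hs, zero_mul]
  rcases h01 r t with ht | ht
  · rw [ht, mul_zero]
  have hle : ∑ u ∈ {s, t}, A r u ≤ ∑ u, A r u :=
    Finset.sum_le_sum_of_subset_of_nonneg (Finset.subset_univ _)
      fun u _ _ => (h01 r u).elim (·.ge) (fun h => h ▸ zero_le_one)
  rw [Finset.sum_pair hst, hs, ht, hrow] at hle
  norm_num at hle

theorem transpose_mul_self_eq_diagonal (h01 : ∀ r t, A r t = 0 ∨ A r t = 1)
    (hrow : ∀ r, ∑ t, A r t = 1) : Aᵀ * A = Matrix.diagonal fun t => ∑ r, A r t := by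
  ext s t
  rw [Matrix.mul_apply]
  rcases eq_or_ne s t with rfl | hst
  · simp only [Matrix.transpose_apply, Matrix.diagonal_apply_eq]
    refine Finset.sum_congr rfl fun r _ => ?_
    rcases h01 r s with h | h <;> simp [h]
  · simp [Matrix.diagonal_apply_ne _ hst, entry_mul_entry_eq_zero_of_ne h01 hrow _ hst]

theorem isUnit_det_transpose_mul_self (h01 : ∀ r t, A r t = 0 ∨ A r t = 1)
    (hrow : ∀ r, ∑ t, A r t = 1) (hcol : ∀ t, ∃ r, A r t ≠ 0) : IsUnit (Aᵀ * A).det := by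
  rw [transpose_mul_self_eq_diagonal h01 hrow, Matrix.det_diagonal, isUnit_iff_ne_zero,
    Finset.prod_ne_zero_iff]
  intro t _
  obtain ⟨r, hr⟩ := hcol t
  refine (Finset.sum_pos' (fun u _ => ?_) ⟨r, Finset.mem_univ r, ?_⟩).ne'
  · rcases h01 u t with h | h <;> simp [h]
  · rcases h01 r t with h | h
    · exact absurd h hr
    · simp [h]

theorem ones_mem_colSpace (hrow : ∀ r, ∑ t, A r t = 1) :
    (WithLp.toLp 2 fun _ => (1 : ℝ) : EuclideanSpace ℝ (Fin n)) ∈ colSpace A := by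
  convert toLp_mulVec_mem_colSpace A fun _ => 1 using 2
  funext r
  simp [Matrix.mulVec, dotProduct, hrow r]

end DesignMatrix

section SpanExcept

variable {n m : ℕ} {c : Fin (m + 1) → ℕ} (X : (j : Fin (m + 1)) → Matrix (Fin n) (Fin (c j)) ℝ)

theorem colSpace_le_spanExcept {i j : Fin (m + 1)} (hji : j ≠ i) :
    colSpace (X j) ≤ spanExcept X i :=
  le_sup_of_le_left <| le_biSup (fun j => colSpace (X j)) <|
    Finset.mem_erase.mpr ⟨hji, Finset.mem_univ j⟩

theorem colSpace_residualMat_isOrtho_spanExcept_iff {i l : Fin (m + 1)}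
    (hones : (WithLp.toLp 2 fun _ => (1 : ℝ) : EuclideanSpace ℝ (Fin n)) ∈ colSpace (X l))
    {q : ℕ} (B : Matrix (Fin n) (Fin q) ℝ) :
    colSpace (residualMat (colSpace (X l)) B) ⟂ spanExcept X i ↔
      ∀ j, j ≠ i → j ≠ l → (residualMat (colSpace (X l)) B)ᵀ * X j = 0 := by
  have hl : colSpace (residualMat (colSpace (X l)) B) ⟂ colSpace (X l) :=
    Submodule.isOrtho_iff_le.mpr (colSpace_residualMat_le_orthogonal _ B)
  have h1 : colSpace (residualMat (colSpace (X l)) B) ⟂ Submodule.span ℝ {_} :=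
    hl.mono_right (Submodule.span_singleton_le_iff_mem _ _ |>.mpr hones)
  simp only [spanExcept, Submodule.isOrtho_sup_right, Submodule.isOrtho_iSup_right,
    ← colSpace_isOrtho_colSpace_iff, Finset.mem_erase, Finset.mem_univ, and_true, h1]
  refine ⟨fun h j hji _ => h j hji, fun h j hji => ?_⟩
  rcases eq_or_ne j l with rfl | hjl
  · exact hl
  · exact h j hji hjl

end SpanExcept

theorem ss_all_eq_ss_block_iff_otb_general {n m : ℕ} {c : Fin (m + 1) → ℕ}
    (X : (j : Fin (m + 1)) → Matrix (Fin n) (Fin (c j)) ℝ)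
    (hX01 : ∀ j r t, X j r t = 0 ∨ X j r t = 1)
    (hXrow : ∀ j r, ∑ t, X j r t = 1)
    (hblock : ∀ t, ∃ r, X (Fin.last m) r t ≠ 0)
    (i : Fin (m + 1)) (hi : i ≠ Fin.last m) :
    (∀ Y : EuclideanSpace ℝ (Fin n),
        (inner ℝ Y (projS (colSpace (residualMat (spanExcept X i) (X i))) Y) : ℝ) =
          (inner ℝ Y (projS (colSpace (residualMat
            (colSpace (X (Fin.last m))) (X i))) Y) : ℝ)) ↔
      ∀ j : Fin (m + 1), j ≠ i → j ≠ Fin.last m →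
        (X i)ᵀ * X j =
          ((X i)ᵀ * X (Fin.last m)) * ((X (Fin.last m))ᵀ * X (Fin.last m))⁻¹ *
            ((X j)ᵀ * X (Fin.last m))ᵀ := by
  have hR := isUnit_det_transpose_mul_self (hX01 _) (hXrow _) hblock
  rw [forall_inner_projS_eq_iff,
    colSpace_residualMat_eq_iff_isOrtho (colSpace_le_spanExcept X hi.symm),
    colSpace_residualMat_isOrtho_spanExcept_iff X (ones_mem_colSpace (hXrow _))]
  simp only [transpose_residualMat_colSpace_mul hR, sub_eq_zero]

/-- For a blocked main-effect plan with design matrices `X j` (the factor `Fin.last m`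
being the block factor, with every block nonempty) and a treatment factor `i`, the
adjusted sum of squares `SS_{i;all} = Yᵀ P_U Y` (with `U = (I − P_{T**}) X_i`) coincides
with the block-adjusted sum of squares `SS_{i;m} = Yᵀ P_W Y` (with
`W = (I − P_m) X_i`) for every `Y` if and only if
`N_{ij} = N_{im} R_m⁻¹ N_{jm}ᵀ` for every treatment factor `j ≠ i`, where
`N_{ij} = X_iᵀ X_j` and `R_m = X_mᵀ X_m` (equivalently `X_iᵀ (I − P_m) X_j = 0`). -/
theorem ss_all_eq_ss_block_iff_otb {n m : ℕ} {c : Fin (m + 1) → ℕ}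
    (X : (j : Fin (m + 1)) → Matrix (Fin n) (Fin (c j)) ℝ)
    (hX01 : ∀ j r t, X j r t = 0 ∨ X j r t = 1)
    (hXrow : ∀ j r, ∑ t, X j r t = 1)
    (hn : 0 < n)
    (hblock : ∀ t, ∃ r, X (Fin.last m) r t ≠ 0)
    (i : Fin (m + 1)) (hi : i ≠ Fin.last m) :
    (∀ Y : EuclideanSpace ℝ (Fin n),
        (inner ℝ Y (projS (colSpace (residualMat (spanExcept X i) (X i))) Y) : ℝ) =
          (inner ℝ Y (projS (colSpace (residualMat
            (colSpace (X (Fin.last m))) (X i))) Y) : ℝ)) ↔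
      ∀ j : Fin (m + 1), j ≠ i → j ≠ Fin.last m →
        (X i)ᵀ * X j =
          ((X i)ᵀ * X (Fin.last m)) * ((X (Fin.last m))ᵀ * X (Fin.last m))⁻¹ *
            ((X j)ᵀ * X (Fin.last m))ᵀ :=
  ss_all_eq_ss_block_iff_otb_general X hX01 hXrow hblock i hi
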